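/- arXiv:q-bio/0409028 — 2 statements merged into one kernel-verified Lean document; each statement's English description precedes it below -/
import Mathlib

section
/- If a < 0 and c < 0, then the polynomial w(x) = (a + 2b - c) x^2 - 2(b - c) x - c has exactly one root in the open interval (0,1): if b = (c - a)/2 then the root is c/(a + c), and otherwise the root is ((b - c) - sqrt(b^2 + a c)) / (a + 2b - c). -/
/-- Uniqueness: at most one root of `w` in `(0,1)`. -/
lemma uniq_aux_negcase (a b c x y : ℝ) (ha : a < 0) (hc : c < 0)
    (hx : x ∈ Set.Ioo (0:ℝ) 1) (hy : y ∈ Set.Ioo (0:ℝ) 1)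
    (hwx : (a + 2 * b - c) * x ^ 2 - 2 * (b - c) * x - c = 0)
    (hwy : (a + 2 * b - c) * y ^ 2 - 2 * (b - c) * y - c = 0) : x = y := by
  by_contra hne
  have hsub : (x - y) * ((a + 2 * b - c) * (x + y) - 2 * (b - c)) = 0 := by
    linear_combination hwx - hwy
  have hxy : (a + 2 * b - c) * (x + y) = 2 * (b - c) := by
    rcases mul_eq_zero.1 hsub with h | h
    · exact absurd (sub_eq_zero.1 h) hne
    · linarith
  have hc' : -c = (a + 2 * b - c) * x * y := by
    linear_combination hwx - x * hxy
  have hA : a = (a + 2 * b - c) * (1 - x) * (1 - y) := by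
    linear_combination hxy + hc'
  have key : a * (-c) = (a + 2 * b - c) ^ 2 * ((1 - x) * (1 - y) * x * y) := by
    linear_combination (-c) * hA + ((a + 2 * b - c) * (1 - x) * (1 - y)) * hc'
  have h1 : a * (-c) < 0 := mul_neg_of_neg_of_pos ha (by linarith)
  have h2 : (0:ℝ) ≤ (a + 2 * b - c) ^ 2 * ((1 - x) * (1 - y) * x * y) := by
    apply mul_nonneg (sq_nonneg _)
    have h1 : (0:ℝ) ≤ 1 - x := by linarith [hx.2]
    have h2 : (0:ℝ) ≤ 1 - y := by linarith [hy.2]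
    exact mul_nonneg (mul_nonneg (mul_nonneg h1 h2) hx.1.le) hy.1.le
  linarith [key ▸ h1]

/-- Existence in the genuinely quadratic case. -/
lemma root_aux_negcase (a b c : ℝ) (ha : a < 0) (hc : c < 0) (hA : a + 2 * b - c ≠ 0) :
    ((b - c) - Real.sqrt (b ^ 2 + a * c)) / (a + 2 * b - c) ∈ Set.Ioo (0:ℝ) 1 ∧
    (a + 2 * b - c) * (((b - c) - Real.sqrt (b ^ 2 + a * c)) / (a + 2 * b - c)) ^ 2
      - 2 * (b - c) * (((b - c) - Real.sqrt (b ^ 2 + a * c)) / (a + 2 * b - c)) - c = 0 := by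
  have hac : 0 < a * c := mul_pos_of_neg_of_neg ha hc
  have hnn : (0:ℝ) ≤ b ^ 2 + a * c := by nlinarith [sq_nonneg b]
  set s := Real.sqrt (b ^ 2 + a * c) with hs
  have hs0 : 0 ≤ s := Real.sqrt_nonneg _
  have hs2 : s ^ 2 = b ^ 2 + a * c := Real.sq_sqrt hnn
  have hroot : (a + 2 * b - c) * (((b - c) - s) / (a + 2 * b - c)) ^ 2
      - 2 * (b - c) * (((b - c) - s) / (a + 2 * b - c)) - c = 0 := by
    field_simp
    linear_combination hs2
  refine ⟨?_, hroot⟩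
  rcases lt_or_gt_of_ne hA with hAneg | hApos
  · -- A < 0 : numerator negative, and 1 - r = (num - A)/A with num - A > 0
    have hnum : (b - c) - s < 0 := by nlinarith [hs0, hs2]
    have hab : a + b < 0 := by
      by_contra h
      push_neg at h
      nlinarith
    have hgap : s < -(a + b) := by nlinarith [hs0, hs2]
    constructor
    · exact div_pos_of_neg_of_neg hnum hAneg
    · rw [div_lt_one_of_neg hAneg]
      linarith
  · -- A > 0
    have hbc : 0 < b - c := by nlinarith
    have hnum : 0 < (b - c) - s := by nlinarith [hs0, hs2]
    have hgap : -(a + b) < s := by nlinarith [hs0, hs2]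
    constructor
    · exact div_pos hnum hApos
    · rw [div_lt_one hApos]
      linarith

/-- If `a < 0` and `c < 0`, then `w(x) = (a + 2b - c) x² - 2(b - c) x - c` has
exactly one root in `(0,1)`; the root is `c/(a+c)` when `b = (c-a)/2`, and
`((b-c) - √(b²+ac))/(a+2b-c)` otherwise. -/
theorem unique_interior_root_negative_case (a b c : ℝ) (ha : a < 0) (hc : c < 0) :
    let w : ℝ → ℝ := fun x => (a + 2 * b - c) * x ^ 2 - 2 * (b - c) * x - c
    (∃! x, x ∈ Set.Ioo (0:ℝ) 1 ∧ w x = 0) ∧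
    (b = (c - a) / 2 →
      c / (a + c) ∈ Set.Ioo (0:ℝ) 1 ∧ w (c / (a + c)) = 0) ∧
    (b ≠ (c - a) / 2 →
      ((b - c) - Real.sqrt (b ^ 2 + a * c)) / (a + 2 * b - c) ∈ Set.Ioo (0:ℝ) 1 ∧
      w (((b - c) - Real.sqrt (b ^ 2 + a * c)) / (a + 2 * b - c)) = 0) := by
  intro w
  have hac : a + c < 0 := by linarith
  have hacne : a + c ≠ 0 := ne_of_lt hac
  have key2 : b = (c - a) / 2 →
      c / (a + c) ∈ Set.Ioo (0:ℝ) 1 ∧ w (c / (a + c)) = 0 := by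
    intro hb
    subst hb
    constructor
    · constructor
      · exact div_pos_of_neg_of_neg hc hac
      · rw [div_lt_one_of_neg hac]; linarith
    · show (a + 2 * ((c - a) / 2) - c) * (c / (a + c)) ^ 2
        - 2 * ((c - a) / 2 - c) * (c / (a + c)) - c = 0
      field_simp
      ring
  have key3 : b ≠ (c - a) / 2 →
      ((b - c) - Real.sqrt (b ^ 2 + a * c)) / (a + 2 * b - c) ∈ Set.Ioo (0:ℝ) 1 ∧
      w (((b - c) - Real.sqrt (b ^ 2 + a * c)) / (a + 2 * b - c)) = 0 := by
    intro hb
    have hA : a + 2 * b - c ≠ 0 := by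
      intro h
      apply hb
      linarith
    exact root_aux_negcase a b c ha hc hA
  refine ⟨?_, key2, key3⟩
  by_cases hb : b = (c - a) / 2
  · obtain ⟨hmem, hval⟩ := key2 hb
    exact ⟨_, ⟨hmem, hval⟩, fun y hy =>
      uniq_aux_negcase a b c y _ ha hc hy.1 hmem hy.2 hval⟩
  · obtain ⟨hmem, hval⟩ := key3 hb
    exact ⟨_, ⟨hmem, hval⟩, fun y hy =>
      uniq_aux_negcase a b c y _ ha hc hy.1 hmem hy.2 hval⟩
end

section
/- If a > 0, c < 0, and b < sqrt(a * |c|), then the polynomial w(x) = (a + 2b - c) x^2 - 2(b - c) x - c has no roots in the open interval (0,1). -/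
/-! Writing `w(x) = a x² - 2 b x (1 - x) + |c| (1 - x)²`, AM-GM gives
`a x² + |c| (1 - x)² ≥ 2 √(a|c|) x (1 - x) > 2 b x (1 - x)` for `x ∈ (0,1)`, so `w > 0` there. -/

open Real

theorem two_mul_sqrt_mul_mul_le {p q : ℝ} (hp : 0 ≤ p) (hq : 0 ≤ q) (u v : ℝ) :
    2 * √(p * q) * (u * v) ≤ p * u ^ 2 + q * v ^ 2 := by
  have key := two_mul_le_add_sq (√p * u) (√q * v)
  rw [sqrt_mul hp]
  calc 2 * (√p * √q) * (u * v) = 2 * (√p * u) * (√q * v) := by ring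
    _ ≤ (√p * u) ^ 2 + (√q * v) ^ 2 := key
    _ = p * u ^ 2 + q * v ^ 2 := by rw [mul_pow, mul_pow, sq_sqrt hp, sq_sqrt hq]

theorem quadratic_form_pos {p q b u v : ℝ} (hp : 0 ≤ p) (hq : 0 ≤ q) (hb : b < √(p * q))
    (huv : 0 < u * v) : 0 < p * u ^ 2 - 2 * b * u * v + q * v ^ 2 := by
  have hlt : 2 * b * (u * v) < 2 * √(p * q) * (u * v) := by gcongr
  linarith [two_mul_sqrt_mul_mul_le hp hq u v]

/-- If `a > 0`, `c < 0` and `b < √(a|c|)`, then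
`w(x) = (a + 2b - c) x² - 2(b - c) x - c` has no roots in `(0,1)`. -/
theorem no_interior_roots (a b c : ℝ)
    (ha : 0 < a) (hc : c < 0) (hb : b < Real.sqrt (a * |c|)) :
    ∀ x ∈ Set.Ioo (0:ℝ) 1,
      (a + 2 * b - c) * x ^ 2 - 2 * (b - c) * x - c ≠ 0 := by
  rintro x ⟨hx0, hx1⟩
  have hw : (a + 2 * b - c) * x ^ 2 - 2 * (b - c) * x - c
      = a * x ^ 2 - 2 * b * x * (1 - x) + |c| * (1 - x) ^ 2 := by
    rw [abs_of_neg hc]; ring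
  rw [hw]
  exact (quadratic_form_pos ha.le (abs_nonneg c) hb (mul_pos hx0 (by linarith))).ne'
end
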